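/- arXiv:2109.05544 — 3 statements merged into one kernel-verified Lean document; each statement's English description precedes it below -/
import Mathlib

section
/- Let μ > 0 and λ, ν ∈ ℂ∖{0}. If φ and ψ are coprime polynomials in ℂ[z] satisfying μ·φ·ψ + z·(φ'·ψ − φ·ψ') = ν/λ (a nonzero constant), then φ is a nonzero constant and ψ(z) = c·z^μ + d for constants c, d ∈ ℂ; in particular if μ ∉ ℕ then ψ is also constant. -/
open Polynomial Complex

lemma aux_coeff (q : Polynomial ℂ) (a : ℂ) (n : ℕ) :
    (X * derivative (derivative q) + C a * derivative q).coeff n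
      = ((n : ℂ) + a) * (derivative q).coeff n := by
  cases n with
  | zero => simp
  | succ k =>
      simp [coeff_X_mul, coeff_derivative]
      ring

/-- If `φ, ψ` are coprime polynomials with `μ·φ·ψ + z·(φ'·ψ − φ·ψ') = ν/λ` a nonzero
constant (`μ > 0`), then `φ` is a nonzero constant and `ψ(z) = c·z^μ + d`; in particular
if `μ ∉ ℕ` then `ψ` is also constant. -/
theorem stmt2 (μ : ℝ) (hμ : 0 < μ) (lam ν : ℂ) (hlam : lam ≠ 0) (hν : ν ≠ 0)
    (φ ψ : Polynomial ℂ) (hcop : IsCoprime φ ψ)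
    (heq : C (μ : ℂ) * φ * ψ + X * (derivative φ * ψ - φ * derivative ψ) = C (ν / lam)) :
    (φ ≠ 0 ∧ φ.natDegree = 0) ∧
    ∃ c d : ℂ, (∀ z : ℂ, z ≠ 0 → ψ.eval z = c * z ^ (μ : ℂ) + d) ∧
      ((∀ n : ℕ, μ ≠ (n : ℝ)) → ψ.natDegree = 0) := by
  have hk : (ν / lam) ≠ 0 := div_ne_zero hν hlam
  have hφ0 : φ ≠ 0 := by
    rintro rfl
    simp at heq
    exact hk (C_eq_zero.1 heq.symm)
  have hd := congrArg derivative heq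
  simp only [derivative_add, derivative_mul, derivative_C, derivative_X, derivative_sub,
    one_mul, mul_zero, zero_mul, add_zero, zero_add] at hd
  set A : Polynomial ℂ := X * derivative (derivative φ) + C ((μ:ℂ) + 1) * derivative φ with hAdef
  set B : Polynomial ℂ := X * derivative (derivative ψ) + C (1 - (μ:ℂ)) * derivative ψ with hBdef
  have key : ψ * A = φ * B := by
    rw [hAdef, hBdef]
    rw [map_add, map_sub, map_one] at *
    linear_combination hd
  have hA : A = 0 := by
    by_cases hφ' : derivative φ = 0
    · rw [hAdef, hφ', derivative_zero]; simp
    · have hdvd : φ ∣ A := hcop.dvd_of_dvd_mul_left ⟨B, key⟩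
      have hcoeff : ∀ n : ℕ, (derivative φ).natDegree < n → A.coeff n = 0 := by
        intro n hn
        rw [hAdef, aux_coeff, coeff_eq_zero_of_natDegree_lt hn, mul_zero]
      have hdegA : A.degree ≤ (derivative φ).degree := by
        rw [degree_eq_natDegree hφ']
        exact degree_le_iff_coeff_zero _ _ |>.2 (fun m hm => hcoeff m (by exact_mod_cast hm))
      exact eq_zero_of_dvd_of_degree_lt hdvd (lt_of_le_of_lt hdegA (degree_derivative_lt hφ0))
  have hφ' : derivative φ = 0 := by
    ext n
    have h1 := aux_coeff φ ((μ:ℂ) + 1) n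
    rw [← hAdef, hA, coeff_zero] at h1
    have h2 : ((n : ℂ) + ((μ:ℂ) + 1)) ≠ 0 := by
      have hcast : ((n:ℂ) + ((μ:ℂ) + 1)) = ((((n:ℝ) + (μ + 1)) : ℝ) : ℂ) := by push_cast; ring
      rw [hcast, Ne, Complex.ofReal_eq_zero]
      positivity
    simpa using (mul_eq_zero.1 h1.symm).resolve_left h2
  have hφdeg : φ.natDegree = 0 := natDegree_eq_zero_of_derivative_eq_zero hφ'
  have hB : B = 0 := by
    have : φ * B = φ * 0 := by rw [mul_zero, ← key, hA, mul_zero]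
    exact mul_left_cancel₀ hφ0 this
  have hψc : ∀ n : ℕ, ((n : ℂ) + (1 - (μ:ℂ))) ≠ 0 → (derivative ψ).coeff n = 0 := by
    intro n hn
    have h1 := aux_coeff ψ (1 - (μ:ℂ)) n
    rw [← hBdef, hB, coeff_zero] at h1
    exact (mul_eq_zero.1 h1.symm).resolve_left hn
  refine ⟨⟨hφ0, hφdeg⟩, ?_⟩
  by_cases hnat : ∃ m : ℕ, μ = (m : ℝ)
  · obtain ⟨m, rfl⟩ := hnat
    have hm : 1 ≤ m := by exact_mod_cast hμ
    have hm0 : ((m : ℂ)) ≠ 0 := Nat.cast_ne_zero.2 (by omega)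
    set e := (derivative ψ).coeff (m - 1) with he
    have hdψ : derivative ψ = C e * X ^ (m - 1) := by
      ext n
      rw [coeff_C_mul, coeff_X_pow]
      by_cases hn : n = m - 1
      · subst hn; simp [he]
      · rw [if_neg hn, mul_zero]
        apply hψc
        have hcast : ((n:ℂ) + (1 - (((m:ℕ):ℝ):ℂ))) = ((((n:ℝ) + (1 - (m:ℝ))) : ℝ) : ℂ) := by
          push_cast; ring
        rw [hcast, Ne, Complex.ofReal_eq_zero]
        intro h
        have h3 : (n:ℝ) + 1 = (m:ℝ) := by linarith
        have h4 : n + 1 = m := by exact_mod_cast h3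
        exact hn (by omega)
    have hψeq : ψ = C (e / m) * X ^ m + C (ψ.coeff 0) := by
      have h0 : derivative (ψ - (C (e / m) * X ^ m + C (ψ.coeff 0))) = 0 := by
        rw [derivative_sub, derivative_add, derivative_C, add_zero, derivative_C_mul,
          derivative_X_pow, hdψ, sub_eq_zero, ← mul_assoc, ← C_mul, div_mul_cancel₀ e hm0]
      have h5 := eq_C_of_natDegree_eq_zero (natDegree_eq_zero_of_derivative_eq_zero h0)
      have hc0 : (ψ - (C (e / m) * X ^ m + C (ψ.coeff 0))).coeff 0 = 0 := by
        have : (X ^ m : Polynomial ℂ).coeff 0 = 0 := by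
          rw [coeff_X_pow, if_neg (by omega)]
        simp [this]
      rw [hc0, map_zero] at h5
      exact sub_eq_zero.1 h5
    refine ⟨e / m, ψ.coeff 0, fun z hz => ?_, fun h => absurd rfl (h m)⟩
    conv_lhs => rw [hψeq]
    rw [show ((((m:ℕ):ℝ):ℂ)) = ((m:ℕ):ℂ) by push_cast; ring, Complex.cpow_natCast]
    simp only [eval_add, eval_mul, eval_pow, eval_C, eval_X]
  · push_neg at hnat
    have hψ' : derivative ψ = 0 := by
      ext n
      rw [coeff_zero]
      apply hψc
      have hcast : ((n:ℂ) + (1 - (μ:ℂ))) = ((((n:ℝ) + (1 - μ)) : ℝ) : ℂ) := by push_cast; ring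
      rw [hcast, Ne, Complex.ofReal_eq_zero]
      intro h
      exact hnat (n + 1) (by push_cast; linarith)
    have hψeq : ψ = C (ψ.coeff 0) :=
      eq_C_of_natDegree_eq_zero (natDegree_eq_zero_of_derivative_eq_zero hψ')
    exact ⟨0, ψ.coeff 0, fun z hz => by rw [hψeq]; simp,
      fun _ => natDegree_eq_zero_of_derivative_eq_zero hψ'⟩
end

section
/- There is no complete non-positively curved Ricci surface conformally equivalent to ℂ with exactly one catenoidal end: more precisely, there is no pair (g, η) on ℂP¹∖{0} with g meromorphic of the form g = z^{−n}·φ(z) (n ∈ ℕ*, φ meromorphic on ℂP¹, φ(0) ≠ 0) and η a meromorphic 1-form on ℂP¹, holomorphic and nonvanishing appropriately on ℂP¹∖{0}, such that the quadratic differential Q = dg⊗η is holomorphic on ℂP¹∖{0} with ord₀ Q = −2 and Q ≢ 0. The obstruction: ord₀ η = n − 1 ≥ 0 forces η to be a holomorphic 1-form on ℂP¹, hence η ≡ 0 and Q ≡ 0, a contradiction. -/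
/-!
Write `η = α dz`. Near `0`, `dg = (z φ' - nφ) z^(-n-1) dz` with `z φ' - nφ` nonzero at `0`, so
`ord₀ Q = -2` forces `α = h z^(n-1) / (z φ' - nφ)`: the form `η` extends holomorphically over `0`.
Being holomorphic at `∞` as well, `α(z) = O(|z|⁻²)`, so Liouville gives `α = 0` and hence `Q = 0`.
-/

open Filter Topology

lemma differentiable_update_of_eventuallyEq_nhdsNE {α G : ℂ → ℂ} {c : ℂ}
    (hα : ∀ z ≠ c, DifferentiableAt ℂ α z) (hG : DifferentiableAt ℂ G c)
    (hαG : α =ᶠ[𝓝[≠] c] G) : Differentiable ℂ (Function.update α c (G c)) := by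
  intro z
  rcases eq_or_ne z c with rfl | hz
  · refine hG.congr_of_eventuallyEq (eventuallyEq_nhds_of_eventuallyEq_nhdsNE ?_ (by simp))
    filter_upwards [hαG, self_mem_nhdsWithin] with w hw hwz
    simp [Function.update_of_ne hwz, hw]
  · refine (hα z hz).congr_of_eventuallyEq ?_
    filter_upwards [eventually_ne_nhds hz] with w hw
    exact Function.update_of_ne hw _ _

-- At `w = 0` both sides are `0 / 0 = 0`.
lemma inv_div_sq_update (α : ℂ → ℂ) (a : ℂ) :
    (fun w => Function.update α 0 a (1 / w) / w ^ 2) = fun w => α (1 / w) / w ^ 2 := by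
  ext w
  rcases eq_or_ne w 0 with rfl | hw
  · simp
  · rw [Function.update_of_ne (one_div_ne_zero hw)]

lemma eq_zero_of_differentiable_of_continuousAt_inv_div_sq {α : ℂ → ℂ}
    (hα : Differentiable ℂ α) (hα_inf : ContinuousAt (fun w => α (1 / w) / w ^ 2) 0) :
    α = 0 := by
  suffices Tendsto α (cocompact ℂ) (𝓝 0) from hα.eq_const_of_tendsto_cocompact this
  have hinv : Tendsto (fun z : ℂ => 1 / z) (cocompact ℂ) (𝓝 0) := by
    simpa [← Metric.cobounded_eq_cocompact] using tendsto_inv₀_cobounded (α := ℂ)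
  have hprod := (hα_inf.tendsto.comp hinv).mul (hinv.pow 2)
  rw [zero_pow two_ne_zero, mul_zero] at hprod
  refine hprod.congr' ?_
  filter_upwards [(isCompact_singleton (x := (0 : ℂ))).compl_mem_cocompact] with z (hz : z ≠ 0)
  simp only [Function.comp_apply, one_div_one_div]
  field_simp

lemma deriv_eq_div_pow_succ_of_eq_div_pow {φ g : ℂ → ℂ} {n : ℕ}
    (hg : ∀ z ≠ 0, g z = φ z / z ^ n) {z : ℂ} (hz : z ≠ 0) (hφ : DifferentiableAt ℂ φ z) :
    deriv g z = (z * deriv φ z - n * φ z) / z ^ (n + 1) := by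
  have hg_nhds : g =ᶠ[𝓝 z] fun w => φ w / w ^ n := by
    filter_upwards [eventually_ne_nhds hz] with w hw
    exact hg w hw
  rw [hg_nhds.deriv_eq, deriv_fun_div hφ (differentiableAt_pow _) (pow_ne_zero _ hz),
    deriv_pow_field]
  rcases n with _ | n
  · simp
    field_simp
  · field_simp
    push_cast
    ring

/-- There is no complete non-positively curved Ricci surface conformally `ℂ` with exactly
one catenoidal end: there is no Weierstrass pair `(g, η = α dz)` on `ℂP¹∖{0}` with
`g = z⁻ⁿ·φ` (`n ≥ 1`, `φ` meromorphic on the sphere, holomorphic at `0` with `φ(0) ≠ 0`),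
`η` meromorphic on the sphere and holomorphic on `ℂP¹∖{0}` (in particular holomorphic at
`∞`, where the coefficient in the coordinate `w = 1/z` is `α(1/w)/w²`), such that the
Hopf differential `Q = dg⊗η` has `ord₀ Q = −2` (in particular `Q ≢ 0`). -/
theorem stmt6 :
    ¬ ∃ (n : ℕ) (φ α g : ℂ → ℂ),
      0 < n ∧
      -- φ is meromorphic on the sphere, holomorphic and nonzero at 0
      MeromorphicOn φ Set.univ ∧ MeromorphicAt (fun w => φ (1 / w)) 0 ∧
      AnalyticAt ℂ φ 0 ∧ φ 0 ≠ 0 ∧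
      -- g = z⁻ⁿ · φ
      (∀ z : ℂ, z ≠ 0 → g z = φ z / z ^ n) ∧
      -- η = α dz is holomorphic on ℂ∖{0} and at ∞
      AnalyticOnNhd ℂ α {z : ℂ | z ≠ 0} ∧
      AnalyticAt ℂ (fun w => α (1 / w) / w ^ 2) 0 ∧
      -- Q = dg⊗η has a pole of order exactly 2 at 0
      (∃ h : ℂ → ℂ, AnalyticAt ℂ h 0 ∧ h 0 ≠ 0 ∧
        ∀ᶠ z in nhdsWithin (0 : ℂ) {(0 : ℂ)}ᶜ, deriv g z * α z = h z / z ^ 2) := by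
  rintro ⟨n, φ, α, g, hn, -, -, hφ, hφ0, hg, hα, hα_inf, h, hh, hh0, hQ⟩
  obtain ⟨m, rfl⟩ := Nat.exists_eq_add_one_of_ne_zero hn.ne'
  set D : ℂ → ℂ := fun z => z * deriv φ z - (m + 1 : ℕ) * φ z
  have hD : AnalyticAt ℂ D 0 := (analyticAt_id.mul hφ.deriv).sub (analyticAt_const.mul hφ)
  have hD0 : D 0 ≠ 0 := by simp [D, hφ0, Nat.cast_add_one_ne_zero]
  -- `Q = D α / z^(m+2)` has a double pole, so `α` has a removable singularity at `0`
  have hαG : α =ᶠ[𝓝[≠] 0] fun z => h z * z ^ m / D z := by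
    filter_upwards [hQ, self_mem_nhdsWithin, nhdsWithin_le_nhds hφ.eventually_analyticAt,
      nhdsWithin_le_nhds (hD.continuousAt.eventually_ne hD0)] with z hQz (hz : z ≠ 0) hφz hDz
    rw [deriv_eq_div_pow_succ_of_eq_div_pow hg hz hφz.differentiableAt] at hQz
    rw [eq_div_iff hDz]
    refine mul_left_cancel₀ (pow_ne_zero 2 hz) ?_
    field_simp at hQz
    linear_combination hQz
  -- the value `α 0` is unconstrained, so pass to the holomorphic extension of `α`
  have hη : Function.update α 0 (h 0 * 0 ^ m / D 0) = 0 :=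
    eq_zero_of_differentiable_of_continuousAt_inv_div_sq
      (differentiable_update_of_eventuallyEq_nhdsNE (fun z hz => (hα z hz).differentiableAt)
        ((hh.mul (analyticAt_id.pow m)).div hD hD0).differentiableAt hαG)
      (by rw [inv_div_sq_update]; exact hα_inf.continuousAt)
  have hfalse : ∀ᶠ z in 𝓝[≠] (0 : ℂ), False := by
    filter_upwards [hQ, self_mem_nhdsWithin,
      nhdsWithin_le_nhds (hh.continuousAt.eventually_ne hh0)] with z hQz hz hhz
    have hαz : α z = 0 := by simpa [Function.update_of_ne hz] using congr_fun hη z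
    rw [hαz, mul_zero, eq_comm, div_eq_zero_iff] at hQz
    exact hQz.elim hhz (pow_ne_zero 2 hz)
  exact hfalse.exists.elim fun _ => id
end

section
/- Suppose for two pairs (a₁, b₁), (a₂, b₂) ∈ (ℝ₊*)² and n ∈ ℕ* there exist complex constants α, β such that for all u ∈ ℂ: e^{n(αu+β)} + a₁ = e^{nu} + a₂ and b₁·α·e^{−n(αu+β)} = b₂·e^{−nu}. Then α = 1, e^{nβ} = 1, a₁ = a₂, and b₁ = b₂. -/
open Complex

/-- If for `(a₁,b₁), (a₂,b₂) ∈ (ℝ₊*)²`, `n ≥ 1` and complex constants `α, β` we have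
`e^{n(αu+β)} + a₁ = e^{nu} + a₂` and `b₁·α·e^{−n(αu+β)} = b₂·e^{−nu}` for all `u ∈ ℂ`,
then `α = 1`, `e^{nβ} = 1`, `a₁ = a₂` and `b₁ = b₂`. -/
theorem stmt9 (n : ℕ) (hn : 0 < n) (a₁ b₁ a₂ b₂ : ℝ)
    (ha₁ : 0 < a₁) (hb₁ : 0 < b₁) (ha₂ : 0 < a₂) (hb₂ : 0 < b₂)
    (α β : ℂ)
    (h1 : ∀ u : ℂ, Complex.exp ((n : ℂ) * (α * u + β)) + (a₁ : ℂ)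
        = Complex.exp ((n : ℂ) * u) + (a₂ : ℂ))
    (h2 : ∀ u : ℂ, (b₁ : ℂ) * α * Complex.exp (-((n : ℂ) * (α * u + β)))
        = (b₂ : ℂ) * Complex.exp (-((n : ℂ) * u))) :
    α = 1 ∧ Complex.exp ((n : ℂ) * β) = 1 ∧ a₁ = a₂ ∧ b₁ = b₂ := by
  have hnc : (n : ℂ) ≠ 0 := Nat.cast_ne_zero.mpr hn.ne'
  -- key identity: b₁ * α = b₂ + b₂ * (a₂ - a₁) * exp (-(n*u))
  have key : ∀ u : ℂ, (b₁ : ℂ) * α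
      = (b₂ : ℂ) + (b₂ : ℂ) * ((a₂ : ℂ) - a₁) * Complex.exp (-((n : ℂ) * u)) := by
    intro u
    have e1 : Complex.exp ((n : ℂ) * (α * u + β))
        = Complex.exp ((n : ℂ) * u) + ((a₂ : ℂ) - a₁) := by
      have := h1 u; linear_combination this
    have e2 := h2 u
    have h3 : (b₁ : ℂ) * α
        = (b₂ : ℂ) * Complex.exp (-((n : ℂ) * u)) * Complex.exp ((n : ℂ) * (α * u + β)) := by
      have hne := Complex.exp_ne_zero (-((n : ℂ) * (α * u + β)))
      have := congrArg (· * Complex.exp ((n : ℂ) * (α * u + β))) e2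
      rw [mul_assoc ((b₁ : ℂ) * α), ← Complex.exp_add, neg_add_cancel,
        Complex.exp_zero, mul_one] at this
      exact this
    rw [h3, e1]
    have hne := Complex.exp_ne_zero ((n : ℂ) * u)
    rw [Complex.exp_neg]
    field_simp
  -- evaluate at u = 0 and u = (log 2)/n
  have k0 := key 0
  simp only [mul_zero, neg_zero, Complex.exp_zero, mul_one] at k0
  have hu2 : Complex.exp (-((n : ℂ) * ((Real.log 2 : ℝ) / n))) = (1/2 : ℂ) := by
    rw [show ((n : ℂ) * ((Real.log 2 : ℝ) / n)) = ((Real.log 2 : ℝ) : ℂ) by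
      field_simp]
    rw [show -((Real.log 2 : ℝ) : ℂ) = ((-Real.log 2 : ℝ) : ℂ) by push_cast; ring]
    rw [← Complex.ofReal_exp, Real.exp_neg, Real.exp_log (by norm_num)]
    norm_num
  have k2 := key ((Real.log 2 : ℝ) / n)
  rw [hu2] at k2
  have hdiff : (b₂ : ℂ) * ((a₂ : ℂ) - a₁) = 0 := by linear_combination 2 * k2 - 2 * k0
  have hb2ne : (b₂ : ℂ) ≠ 0 := by exact_mod_cast hb₂.ne'
  have ha : (a₂ : ℂ) = a₁ := by
    have := (mul_eq_zero.mp hdiff).resolve_left hb2ne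
    linear_combination this
  have haeq : a₁ = a₂ := by exact_mod_cast ha.symm
  have hba : (b₁ : ℂ) * α = b₂ := by rw [k0, ha]; ring
  -- exp equality
  have hexp : ∀ u : ℂ, Complex.exp ((n : ℂ) * (α * u + β)) = Complex.exp ((n : ℂ) * u) := by
    intro u
    have := h1 u
    rw [ha] at this
    linear_combination this
  have hβ : Complex.exp ((n : ℂ) * β) = 1 := by
    have := hexp 0
    simpa using this
  have hconst : ∀ u : ℂ, Complex.exp ((n : ℂ) * (α - 1) * u) = 1 := by
    intro u
    have h := hexp u
    have h' : Complex.exp ((n : ℂ) * (α * u)) * Complex.exp ((n : ℂ) * β)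
        = Complex.exp ((n : ℂ) * u) := by
      rw [← Complex.exp_add, show (n : ℂ) * (α * u) + n * β = n * (α * u + β) by ring]
      exact h
    rw [hβ, mul_one] at h'
    have h'' : Complex.exp ((n : ℂ) * (α * u)) * Complex.exp (-((n : ℂ) * u)) = 1 := by
      rw [h', ← Complex.exp_add]; simp
    rw [← Complex.exp_add] at h''
    rw [show (n : ℂ) * (α - 1) * u = (n : ℂ) * (α * u) + -((n : ℂ) * u) by ring]
    exact h''
  -- α = 1
  have hα : α = 1 := by
    by_contra hne
    have h1' := hconst 1
    have hI := hconst Complex.I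
    rw [mul_one] at h1'
    obtain ⟨k, hk⟩ := Complex.exp_eq_one_iff.mp h1'
    obtain ⟨m, hm⟩ := Complex.exp_eq_one_iff.mp hI
    rw [hk] at hm
    have hπ : (Real.pi : ℂ) ≠ 0 := by exact_mod_cast Real.pi_ne_zero
    have hmk : (k : ℂ) * I = m := by
      have h2π : (2 * (Real.pi : ℂ) * I) ≠ 0 := by
        simp [hπ, Complex.I_ne_zero]
      apply mul_right_cancel₀ h2π
      linear_combination hm
    have hk0 : (k : ℤ) = 0 := by
      have him := congrArg Complex.im hmk
      simpa using him
    rw [hk0] at hk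
    have hz : (n : ℂ) * (α - 1) = 0 := by rw [hk]; simp
    rcases mul_eq_zero.mp hz with h | h
    · exact hnc h
    · exact hne (by linear_combination h)
  refine ⟨hα, hβ, haeq, ?_⟩
  rw [hα, mul_one] at hba
  exact_mod_cast hba
end
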